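/- Let A be a Hurwitz d×d real matrix, x₀ ∈ ℝ^d, x₀ ≠ 0, and T_cut = T_cut(x₀). Then every extreme point of G = co_s {e^{tA}x₀ : t ≥ 0} lies on the union of the two curves Γ(0,T_cut) and −Γ(0,T_cut), where Γ(0,T_cut) = {e^{tA}x₀ : t ∈ [0,T_cut]}. -/

import Mathlib

open Matrix Set Filter Topology

noncomputable section

/-- A real square matrix is *Hurwitz* if all its (complex) eigenvalues,
i.e. the roots of its characteristic polynomial over `ℂ`, have negative real part. -/
def IsHurwitz {d : ℕ} (A : Matrix (Fin d) (Fin d) ℝ) : Prop :=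
  ∀ μ : ℂ, (A.map (algebraMap ℝ ℂ)).charpoly.IsRoot μ → μ.re < 0

/-- The trajectory `x(t) = e^{tA} x₀` of the linear system `ẋ = Ax`. -/
def traj {d : ℕ} (A : Matrix (Fin d) (Fin d) ℝ) (x₀ : Fin d → ℝ) (t : ℝ) : Fin d → ℝ :=
  (NormedSpace.exp (t • A)).mulVec x₀

/-- Symmetrized convex hull `co_s X = co (X ∪ (−X))`. -/
def symCo {d : ℕ} (X : Set (Fin d → ℝ)) : Set (Fin d → ℝ) :=
  convexHull ℝ (X ∪ (-X))

/-- `G = co_s {x(t) : t ≥ 0}`, the symmetrized convex hull of the whole trajectory. -/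
def trajHull {d : ℕ} (A : Matrix (Fin d) (Fin d) ℝ) (x₀ : Fin d → ℝ) : Set (Fin d → ℝ) :=
  symCo (traj A x₀ '' Ici (0:ℝ))

/-- `T > 0` is a *cut tail point* of the trajectory starting at `x₀` if `x(t)` lies in the
relative (intrinsic) interior of `G` for every `t ≥ T`. -/
def IsCutTailPoint {d : ℕ} (A : Matrix (Fin d) (Fin d) ℝ) (x₀ : Fin d → ℝ) (T : ℝ) : Prop :=
  0 < T ∧ ∀ t, T ≤ t → traj A x₀ t ∈ intrinsicInterior ℝ (trajHull A x₀)

/-- `T_cut(x₀)`: the infimum of all cut tail points of the trajectory starting at `x₀`. -/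
def Tcut {d : ℕ} (A : Matrix (Fin d) (Fin d) ℝ) (x₀ : Fin d → ℝ) : ℝ :=
  sInf {T | IsCutTailPoint A x₀ T}

/-- `L_{x₀}`: the minimal `A`-invariant linear subspace of `ℝ^d` containing `x₀`. -/
def minInv {d : ℕ} (A : Matrix (Fin d) (Fin d) ℝ) (x₀ : Fin d → ℝ) : Submodule ℝ (Fin d → ℝ) :=
  sInf {L | x₀ ∈ L ∧ ∀ v ∈ L, A.mulVec v ∈ L}

/-- A point `x₀` is *generic* if `dim L_{x₀}` equals the degree of the minimal polynomial of `A`. -/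
def IsGeneric {d : ℕ} (A : Matrix (Fin d) (Fin d) ℝ) (x₀ : Fin d → ℝ) : Prop :=
  Module.finrank ℝ (minInv A x₀) = (minpoly ℝ A).natDegree

/-!
Over `ℂ`, every vector is a sum of generalized eigenvectors of `A`, and on the generalized
eigenspace of `μ` one has `e^{tA} w = e^{tμ} ∑_{j<k} t^j/j! (A - μ)^j w`; since `Re μ < 0`, every
trajectory tends to `0`. The hull `G` is convex and symmetric, so `0` lies in its relative
interior, and hence the trajectory eventually stays there: cut tail points exist and every
`t > T_cut` puts `±x(t)` in the relative interior. A relative interior point of a set containing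
two distinct points (here `±x₀`) is not extreme, while every extreme point of `G` is `±x(t)` for
some `t ≥ 0`.
-/

theorem Complex.tendsto_exp_mul_mul_pow_atTop_nhds_zero {μ : ℂ} (hμ : μ.re < 0) (j : ℕ) :
    Tendsto (fun t : ℝ => Complex.exp (t * μ) * (t : ℂ) ^ j) atTop (𝓝 0) := by
  rw [tendsto_zero_iff_norm_tendsto_zero]
  refine (tendsto_rpow_mul_exp_neg_mul_atTop_nhds_zero j (-μ.re) (by linarith)).congr' ?_
  filter_upwards [eventually_ge_atTop 0] with t ht
  rw [norm_mul, Complex.norm_exp, norm_pow, Complex.norm_real, Real.norm_of_nonneg ht,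
    Real.rpow_natCast, mul_comm]
  simp [mul_comm]

namespace Matrix

variable {m : Type*} [Fintype m] [DecidableEq m]

theorem exp_mulVec_eq_sum {N : Matrix m m ℂ} {w : m → ℂ} {k : ℕ} (hk : (N ^ k) *ᵥ w = 0) :
    NormedSpace.exp N *ᵥ w = ∑ j ∈ Finset.range k, (j.factorial : ℂ)⁻¹ • ((N ^ j) *ᵥ w) := by
  let _ : NormedRing (Matrix m m ℂ) := Matrix.linftyOpNormedRing
  let _ : NormedAlgebra ℂ (Matrix m m ℂ) := Matrix.linftyOpNormedAlgebra
  have hvanish : ∀ j ∉ Finset.range k, (j.factorial : ℂ)⁻¹ • ((N ^ j) *ᵥ w) = 0 := by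
    intro j hj
    rw [← Nat.sub_add_cancel (not_lt.1 (Finset.mem_range.not.1 hj)), pow_add, ← mulVec_mulVec,
      hk, mulVec_zero, smul_zero]
  have hseries := (NormedSpace.exp_series_hasSum_exp' (𝕂 := ℂ) N).map
    (mulVec.addMonoidHomLeft w) (continuous_id.matrix_mulVec continuous_const)
  refine hseries.unique ?_
  convert hasSum_sum_of_ne_finset_zero (L := .unconditional ℕ) hvanish using 1
  ext j : 1
  exact smul_mulVec _ _ _

theorem exp_smul_mulVec_eq_of_pow_mulVec_eq_zero {A : Matrix m m ℂ} {μ : ℂ} {w : m → ℂ}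
    {k : ℕ} (hk : ((A - μ • 1) ^ k) *ᵥ w = 0) (t : ℝ) :
    NormedSpace.exp (t • A) *ᵥ w = Complex.exp (t * μ) •
      ∑ j ∈ Finset.range k, ((t : ℂ) ^ j * (j.factorial : ℂ)⁻¹) • (((A - μ • 1) ^ j) *ᵥ w) := by
  set N := A - μ • 1
  have hsplit : t • A = diagonal (fun _ => (t * μ : ℂ)) + t • N := by
    ext i j
    by_cases hij : i = j
    · subst hij
      simp only [N, smul_apply, Complex.real_smul, add_apply, diagonal_apply_eq, sub_apply,
        one_apply_eq, smul_eq_mul, mul_one]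
      ring
    · simp [N, hij]
  have hcomm : Commute (diagonal fun _ => (t * μ : ℂ)) (t • N) := by
    simpa [scalar_apply] using scalar_commute (t * μ : ℂ) (fun r => Commute.all _ r) (t • N)
  have hdiag : NormedSpace.exp (fun _ : m => (t * μ : ℂ)) = fun _ => Complex.exp (t * μ) := by
    ext; rw [Pi.coe_exp, Complex.exp_eq_exp_ℂ]
  have hnil : ((t • N) ^ k) *ᵥ w = 0 := by rw [smul_pow, smul_mulVec, hk, smul_zero]
  rw [hsplit, exp_add_of_commute _ _ hcomm, exp_diagonal, hdiag, ← smul_eq_diagonal_mul,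
    smul_mulVec, exp_mulVec_eq_sum hnil]
  congr 1
  refine Finset.sum_congr rfl fun j _ => ?_
  rw [smul_pow, smul_mulVec, ← Complex.coe_smul, smul_smul]
  push_cast
  ring_nf

theorem isRoot_charpoly_of_mem_maxGenEigenspace {K : Type*} [Field K] {A : Matrix m m K}
    {μ : K} {w : m → K} (hw : w ∈ Module.End.maxGenEigenspace (toLin' A) μ) (hw₀ : w ≠ 0) :
    A.charpoly.IsRoot μ := by
  have hgen : Module.End.HasUnifEigenvalue (toLin' A) μ ⊤ :=
    (Submodule.ne_bot_iff _).2 ⟨w, hw, hw₀⟩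
  rw [← charpoly_toLin', ← Module.End.hasEigenvalue_iff_isRoot_charpoly]
  exact hgen.lt zero_lt_one

theorem tendsto_exp_smul_mulVec_of_mem_maxGenEigenspace {A : Matrix m m ℂ} {μ : ℂ}
    (hμ : μ.re < 0) {w : m → ℂ} (hw : w ∈ Module.End.maxGenEigenspace (toLin' A) μ) :
    Tendsto (fun t : ℝ => NormedSpace.exp (t • A) *ᵥ w) atTop (𝓝 0) := by
  obtain ⟨k, hk⟩ := (Module.End.mem_maxGenEigenspace _ _ _).1 hw
  have hk' : ((A - μ • 1) ^ k) *ᵥ w = 0 := by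
    rw [← toLinAlgEquiv'_apply, map_pow, map_sub, map_smul, map_one]
    exact hk
  have hterms := tendsto_finsetSum (Finset.range k) fun j _ =>
    (Complex.tendsto_exp_mul_mul_pow_atTop_nhds_zero hμ j).smul_const
      ((j.factorial : ℂ)⁻¹ • (((A - μ • 1) ^ j) *ᵥ w))
  simp only [zero_smul, Finset.sum_const_zero] at hterms
  refine hterms.congr fun t => ?_
  rw [exp_smul_mulVec_eq_of_pow_mulVec_eq_zero hk', Finset.smul_sum]
  refine Finset.sum_congr rfl fun j _ => ?_
  rw [smul_smul, smul_smul, mul_assoc]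

theorem tendsto_exp_smul_mulVec_of_re_lt_zero {A : Matrix m m ℂ}
    (hA : ∀ μ : ℂ, A.charpoly.IsRoot μ → μ.re < 0) (v : m → ℂ) :
    Tendsto (fun t : ℝ => NormedSpace.exp (t • A) *ᵥ v) atTop (𝓝 0) := by
  have hv : v ∈ ⨆ μ, Module.End.maxGenEigenspace (toLin' A) μ := by
    rw [Module.End.iSup_maxGenEigenspace_eq_top]; trivial
  induction hv using Submodule.iSup_induction' with
  | mem μ w hw =>
    obtain rfl | hw₀ := eq_or_ne w 0
    · simp
    · exact tendsto_exp_smul_mulVec_of_mem_maxGenEigenspace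
        (hA μ (isRoot_charpoly_of_mem_maxGenEigenspace hw hw₀)) hw
  | zero => simp
  | add w₁ w₂ _ _ h₁ h₂ => simpa [mulVec_add] using h₁.add h₂

theorem exp_map_algebraMap (M : Matrix m m ℝ) :
    (NormedSpace.exp M).map (algebraMap ℝ ℂ) = NormedSpace.exp (M.map (algebraMap ℝ ℂ)) := by
  let _ : NormedRing (Matrix m m ℝ) := Matrix.linftyOpNormedRing
  let _ : NormedAlgebra ℝ (Matrix m m ℝ) := Matrix.linftyOpNormedAlgebra
  let _ : NormedAlgebra ℚ (Matrix m m ℝ) := Matrix.linftyOpNormedAlgebra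
  let _ : NormedRing (Matrix m m ℂ) := Matrix.linftyOpNormedRing
  have hcont : Continuous (algebraMap ℝ ℂ).mapMatrix :=
    (continuous_id.matrix_map (continuous_algebraMap ℝ ℂ) :
      Continuous fun M : Matrix m m ℝ => _)
  exact NormedSpace.map_exp (algebraMap ℝ ℂ).mapMatrix hcont M

end Matrix

section IntrinsicInterior

theorem mem_intrinsicInterior_iff_mem_nhdsWithin {𝕜 V P : Type*} [Ring 𝕜] [AddCommGroup V]
    [Module 𝕜 V] [TopologicalSpace P] [AddTorsor V P] {s : Set P} {x : P} :
    x ∈ intrinsicInterior 𝕜 s ↔ x ∈ affineSpan 𝕜 s ∧ s ∈ 𝓝[affineSpan 𝕜 s] x := by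
  simp only [mem_intrinsicInterior, mem_interior_iff_mem_nhds]
  constructor
  · rintro ⟨y, hy, rfl⟩
    exact ⟨y.2, preimage_coe_mem_nhds_subtype.1 hy⟩
  · rintro ⟨hx, hs⟩
    exact ⟨⟨x, hx⟩, preimage_coe_mem_nhds_subtype.2 hs, rfl⟩

variable {E : Type*} [NormedAddCommGroup E] [NormedSpace ℝ E] {s : Set E} {x : E}

theorem intrinsicInterior_mem_nhdsWithin (hx : x ∈ intrinsicInterior ℝ s) :
    intrinsicInterior ℝ s ∈ 𝓝[affineSpan ℝ s] x := by
  have hs := (mem_intrinsicInterior_iff_mem_nhdsWithin.1 hx).2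
  filter_upwards [eventually_eventually_nhdsWithin.2 hs, self_mem_nhdsWithin] with y hy hyS
  exact mem_intrinsicInterior_iff_mem_nhdsWithin.2 ⟨hyS, hy⟩

theorem intrinsicInterior_neg (s : Set E) :
    intrinsicInterior ℝ (-s) = -intrinsicInterior ℝ s := by
  simpa using
    (ContinuousLinearEquiv.neg ℝ (M := E)).toContinuousAffineEquiv.intrinsicInterior_image s

theorem notMem_extremePoints_of_mem_intrinsicInterior {a b : E} (ha : a ∈ s) (hb : b ∈ s)
    (hab : a ≠ b) (hx : x ∈ intrinsicInterior ℝ s) : x ∉ extremePoints ℝ s := by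
  intro hext
  obtain ⟨hxS, hs⟩ := mem_intrinsicInterior_iff_mem_nhdsWithin.1 hx
  set line : ℝ → E := fun c => x + c • (a - b)
  have hline : ∀ c, line c ∈ affineSpan ℝ s := fun c => by
    simpa [line, vsub_eq_sub, vadd_eq_add, add_comm] using AffineSubspace.smul_vsub_vadd_mem _ c
      (subset_affineSpan ℝ s ha) (subset_affineSpan ℝ s hb) hxS
  have hcont : Tendsto line (𝓝 0) (𝓝[affineSpan ℝ s] x) := by
    have : Continuous line := by fun_prop
    exact tendsto_nhdsWithin_iff.2 ⟨this.tendsto' 0 x (by simp [line]), .of_forall hline⟩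
  obtain ⟨δ, hδ, hball⟩ := Metric.eventually_nhds_iff.1 (hcont hs)
  have hplus := hball (y := δ / 2) (by rw [Real.dist_eq, abs_of_pos] <;> linarith)
  have hminus := hball (y := -(δ / 2)) (by rw [Real.dist_eq, abs_of_neg] <;> linarith)
  have hseg : x ∈ openSegment ℝ (line (δ / 2)) (line (-(δ / 2))) :=
    ⟨1/2, 1/2, by norm_num, by norm_num, by norm_num, by simp only [line]; module⟩
  have heq : line (δ / 2) = x := hext.2 hplus hminus hseg
  have : (δ / 2) • (a - b) = 0 := by simpa [line] using heq
  rcases smul_eq_zero.1 this with h | h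
  · linarith
  · exact hab (sub_eq_zero.1 h)

theorem zero_mem_intrinsicInterior_of_neg_eq [FiniteDimensional ℝ E] (hconv : Convex ℝ s)
    (hsymm : -s = s) (hne : s.Nonempty) : (0 : E) ∈ intrinsicInterior ℝ s := by
  obtain ⟨y, hy⟩ := hne.intrinsicInterior hconv
  obtain ⟨hyS, hs⟩ := mem_intrinsicInterior_iff_mem_nhdsWithin.1 hy
  have hnegy : -y ∈ s := by
    rw [← hsymm]; simpa using intrinsicInterior_subset hy
  have h0S : (0 : E) ∈ affineSpan ℝ s := by
    convert AffineSubspace.smul_vsub_vadd_mem _ (1/2 : ℝ) (subset_affineSpan ℝ s hnegy) hyS hyS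
      using 1
    simp only [vsub_eq_sub, vadd_eq_add]; module
  -- `0` is the midpoint of `-y ∈ s` and `2 • z + y`, which lies in `s` for `z` near `0`.
  set stretch : E → E := fun z => (2 : ℝ) • z + y
  have hstretch : Tendsto stretch (𝓝[affineSpan ℝ s] 0) (𝓝[affineSpan ℝ s] y) := by
    have : Continuous stretch := by fun_prop
    refine tendsto_nhdsWithin_iff.2
      ⟨tendsto_nhdsWithin_of_tendsto_nhds (this.tendsto' 0 y (by simp [stretch])), ?_⟩
    filter_upwards [self_mem_nhdsWithin] with z hz
    simpa [stretch, vsub_eq_sub, vadd_eq_add] using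
      AffineSubspace.smul_vsub_vadd_mem _ (2 : ℝ) hz h0S hyS
  refine mem_intrinsicInterior_iff_mem_nhdsWithin.2 ⟨h0S, ?_⟩
  filter_upwards [hstretch hs] with z hz
  convert hconv hz hnegy (by norm_num : (0:ℝ) ≤ 1/2) (by norm_num : (0:ℝ) ≤ 1/2) (by norm_num)
    using 1
  simp only [stretch]; module

end IntrinsicInterior

section TrajHull

variable {d : ℕ} {A : Matrix (Fin d) (Fin d) ℝ} {x₀ : Fin d → ℝ}

theorem IsHurwitz.tendsto_traj (hA : IsHurwitz A) (x₀ : Fin d → ℝ) :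
    Tendsto (traj A x₀) atTop (𝓝 0) := by
  have hcomplexify : ∀ t : ℝ, algebraMap ℝ ℂ ∘ traj A x₀ t =
      NormedSpace.exp (t • A.map (algebraMap ℝ ℂ)) *ᵥ (algebraMap ℝ ℂ ∘ x₀) := fun t => by
    have hsmul : t • A.map (algebraMap ℝ ℂ) = (t • A).map (algebraMap ℝ ℂ) := by
      ext; simp [Complex.real_smul]
    ext i
    rw [hsmul, ← exp_map_algebraMap, Function.comp_apply, traj, RingHom.map_mulVec]
  have hC := tendsto_exp_smul_mulVec_of_re_lt_zero hA (algebraMap ℝ ℂ ∘ x₀)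
  refine tendsto_pi_nhds.2 fun i => ?_
  have hre := (Complex.continuous_re.tendsto 0).comp ((continuous_apply i).tendsto 0 |>.comp hC)
  rw [Complex.zero_re] at hre
  refine hre.congr fun t => ?_
  rw [Function.comp_apply, Function.comp_apply, ← hcomplexify, Function.comp_apply,
    Complex.coe_algebraMap, Complex.ofReal_re]

theorem neg_symCo (X : Set (Fin d → ℝ)) : -symCo X = symCo X := by
  rw [symCo, ← convexHull_neg, Set.union_neg, neg_neg, Set.union_comm]

theorem traj_zero : traj A x₀ 0 = x₀ := by
  rw [traj, zero_smul, NormedSpace.exp_zero, one_mulVec]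

theorem traj_mem_trajHull {t : ℝ} (ht : 0 ≤ t) : traj A x₀ t ∈ trajHull A x₀ :=
  subset_convexHull ℝ _ (Or.inl ⟨t, ht, rfl⟩)

theorem self_mem_trajHull : x₀ ∈ trajHull A x₀ := by
  simpa only [traj_zero] using traj_mem_trajHull (A := A) (x₀ := x₀) le_rfl

theorem neg_self_mem_trajHull : -x₀ ∈ trajHull A x₀ := by
  rw [trajHull, ← neg_symCo]
  exact Set.neg_mem_neg.2 self_mem_trajHull

theorem IsHurwitz.exists_isCutTailPoint (hA : IsHurwitz A) (x₀ : Fin d → ℝ) :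
    ∃ T, IsCutTailPoint A x₀ T := by
  have h₀ : (0 : Fin d → ℝ) ∈ intrinsicInterior ℝ (trajHull A x₀) :=
    zero_mem_intrinsicInterior_of_neg_eq (convex_convexHull ℝ _) (neg_symCo _)
      ⟨x₀, self_mem_trajHull⟩
  have hspan : ∀ᶠ t in atTop, traj A x₀ t ∈ affineSpan ℝ (trajHull A x₀) := by
    filter_upwards [eventually_ge_atTop 0] with t ht
    exact subset_affineSpan ℝ _ (traj_mem_trajHull ht)
  obtain ⟨T, hT⟩ := eventually_atTop.1 <|
    tendsto_nhdsWithin_iff.2 ⟨hA.tendsto_traj x₀, hspan⟩ (intrinsicInterior_mem_nhdsWithin h₀)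
  exact ⟨max T 1, by positivity, fun t ht => hT t (le_of_max_le_left ht)⟩

theorem IsHurwitz.traj_mem_intrinsicInterior (hA : IsHurwitz A) {t : ℝ}
    (ht : Tcut A x₀ < t) : traj A x₀ t ∈ intrinsicInterior ℝ (trajHull A x₀) := by
  obtain ⟨T, hT, hTt⟩ := exists_lt_of_csInf_lt (hA.exists_isCutTailPoint x₀) ht
  exact hT.2 t hTt.le

end TrajHull

/-- All extreme points of `G` are located on the curves `± Γ(0, T_cut)`. -/
theorem extremePoints_subset_arcs {d : ℕ} (A : Matrix (Fin d) (Fin d) ℝ) (hA : IsHurwitz A)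
    (x₀ : Fin d → ℝ) (hx₀ : x₀ ≠ 0) :
    Set.extremePoints ℝ (trajHull A x₀) ⊆
      (traj A x₀ '' Icc (0:ℝ) (Tcut A x₀)) ∪ (-(traj A x₀ '' Icc (0:ℝ) (Tcut A x₀))) := by
  intro x hx
  have hnotExtreme : ∀ y ∈ intrinsicInterior ℝ (trajHull A x₀),
      y ∉ extremePoints ℝ (trajHull A x₀) := fun _ =>
    notMem_extremePoints_of_mem_intrinsicInterior self_mem_trajHull neg_self_mem_trajHull
      (self_ne_neg.2 hx₀)
  rcases extremePoints_convexHull_subset hx with ⟨t, ht, rfl⟩ | ⟨t, ht, hxt⟩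
  · exact Or.inl ⟨t, ⟨ht, not_lt.1 fun hlt =>
      hnotExtreme _ (hA.traj_mem_intrinsicInterior hlt) hx⟩, rfl⟩
  · refine Or.inr ⟨t, ⟨ht, not_lt.1 fun hlt => hnotExtreme x ?_ hx⟩, hxt⟩
    rw [trajHull, ← neg_symCo, intrinsicInterior_neg, Set.mem_neg, ← hxt]
    exact hA.traj_mem_intrinsicInterior hlt
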